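/- arXiv:2407.05459 — 6 statements merged into one kernel-verified Lean document; each statement's English description precedes it below -/
import Mathlib

section
/- Fix a signal s with weights w_θ = μ(θ)π(s|θ) ≥ 0, contracts p^θ ∈ ℝ₊^m, and suppose the action-contract pair (a, {p^θ}) is ξ-IC under s, i.e., ∑_θ w_θ[⟨F^θ_a, p^θ⟩ − c_a] ≥ ∑_θ w_θ[⟨F^θ_i, p^θ⟩ − c_i] − ξ for all actions i. Let η ∈ (0,1] and define perturbed contracts p̄^θ = (1−η)p^θ + η r, and let a' be any exact best response under {p̄^θ} (i.e., (a', {p̄^θ}) is 0-IC). Then the principal's utility satisfies ∑_θ w_θ ⟨F^θ_{a'}, r − p̄^θ⟩ ≥ ∑_θ w_θ ⟨F^θ_a, r − p^θ⟩ − ξ/η − η·∑_θ w_θ ⟨F^θ_a, r − p^θ⟩. In particular, if rewards satisfy ⟨F^θ_a, r − p^θ⟩-terms sum to at most 1 and we set η = √ξ, the utility loss is at most (1+1)√ξ per signal, i.e., ∑_θ w_θ ⟨F^θ_{a'}, r − p̄^θ⟩ ≥ ∑_θ w_θ ⟨F^θ_a, r − p^θ⟩ − 2√ξ. -/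
/-!
Mixing the contracts with the linear contract `r` shifts the agent's payment by `η` times the
principal's utility and scales the principal's utility by `1 - η`. Against the exact best response
`a'` to the mixed contracts, the `ξ`-IC of `a` then leaves `η · (U_P(a') - U_P(a)) ≥ -ξ`, so the
principal loses at most `ξ / η` before the scaling and at most `ξ / η + η · U_P(a)` after it.
-/

open Finset

section Utilities

variable {Θ ι Ω : Type*} [Fintype Θ] [Fintype Ω]

def agentUtility (w : Θ → ℝ) (F : Θ → ι → Ω → ℝ) (c : ι → ℝ) (q : Θ → Ω → ℝ) (i : ι) : ℝ :=
  ∑ θ, w θ * ((∑ j, F θ i j * q θ j) - c i)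

def principalUtility (w : Θ → ℝ) (F : Θ → ι → Ω → ℝ) (r : Ω → ℝ) (q : Θ → Ω → ℝ) (i : ι) : ℝ :=
  ∑ θ, w θ * ∑ j, F θ i j * (r j - q θ j)

def mixLinear (r : Ω → ℝ) (η : ℝ) (q : Θ → Ω → ℝ) : Θ → Ω → ℝ :=
  fun θ j => (1 - η) * q θ j + η * r j

variable (w : Θ → ℝ) (F : Θ → ι → Ω → ℝ) (c : ι → ℝ) (r : Ω → ℝ) (η : ℝ) (q : Θ → Ω → ℝ)
  (i : ι)

theorem agentUtility_mixLinear :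
    agentUtility w F c (mixLinear r η q) i =
      agentUtility w F c q i + η * principalUtility w F r q i := by
  have payment (θ : Θ) : ∑ j, F θ i j * mixLinear r η q θ j =
      ∑ j, F θ i j * q θ j + η * ∑ j, F θ i j * (r j - q θ j) := by
    rw [mul_sum, ← sum_add_distrib]
    exact sum_congr rfl fun j _ => by simp only [mixLinear]; ring
  simp only [agentUtility, principalUtility, payment]
  rw [mul_sum, ← sum_add_distrib]
  exact sum_congr rfl fun θ _ => by ring

theorem principalUtility_mixLinear :
    principalUtility w F r (mixLinear r η q) i = (1 - η) * principalUtility w F r q i := by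
  simp only [principalUtility, mixLinear, mul_sum]
  exact sum_congr rfl fun θ _ => sum_congr rfl fun j _ => by ring

theorem principalUtility_sub_div_le_of_bestResponse_mixLinear {a a' : ι} {ξ : ℝ} (hη : 0 < η)
    (hIC : agentUtility w F c q a' - ξ ≤ agentUtility w F c q a)
    (hbr : agentUtility w F c (mixLinear r η q) a ≤ agentUtility w F c (mixLinear r η q) a') :
    principalUtility w F r q a - ξ / η ≤ principalUtility w F r q a' := by
  rw [agentUtility_mixLinear, agentUtility_mixLinear] at hbr
  have hgap : η * (principalUtility w F r q a - principalUtility w F r q a') ≤ ξ := by linarith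
  linarith [(le_div_iff₀' hη).2 hgap]

end Utilities

theorem stmt_1_general {Θ : Type} [Fintype Θ] {n m : ℕ}
    (w : Θ → ℝ) (F : Θ → Fin n → Fin m → ℝ) (c : Fin n → ℝ) (r : Fin m → ℝ)
    (p : Θ → Fin m → ℝ) (ξ η : ℝ) (a a' : Fin n)
    (hξ : 0 ≤ ξ) (hη : 0 < η) (hη1 : η ≤ 1)
    (hξIC : ∀ i, ∑ θ, w θ * ((∑ j, F θ a j * p θ j) - c a) ≥
                 ∑ θ, w θ * ((∑ j, F θ i j * p θ j) - c i) - ξ)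
    (pbar : Θ → Fin m → ℝ)
    (hpbar : ∀ θ j, pbar θ j = (1 - η) * p θ j + η * r j)
    (hbr : ∀ i, ∑ θ, w θ * ((∑ j, F θ a' j * pbar θ j) - c a') ≥
                ∑ θ, w θ * ((∑ j, F θ i j * pbar θ j) - c i)) :
    (∑ θ, w θ * (∑ j, F θ a' j * (r j - pbar θ j)) ≥
      ∑ θ, w θ * (∑ j, F θ a j * (r j - p θ j)) - ξ/η -
        η * ∑ θ, w θ * (∑ j, F θ a j * (r j - p θ j))) ∧
    ((∑ θ, w θ * (∑ j, F θ a j * (r j - p θ j)) ≤ 1) → η = Real.sqrt ξ →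
      ∑ θ, w θ * (∑ j, F θ a' j * (r j - pbar θ j)) ≥
        ∑ θ, w θ * (∑ j, F θ a j * (r j - p θ j)) - 2 * Real.sqrt ξ) := by
  obtain rfl : pbar = mixLinear r η p := funext₂ hpbar
  set U := principalUtility w F r p a
  have hloss : U - ξ / η ≤ principalUtility w F r p a' :=
    principalUtility_sub_div_le_of_bestResponse_mixLinear w F c r η p hη (hξIC a') (hbr a)
  have hmixed : U - ξ / η - η * U ≤ principalUtility w F r (mixLinear r η p) a' := by
    rw [principalUtility_mixLinear]
    nlinarith [mul_le_mul_of_nonneg_left hloss (sub_nonneg.2 hη1), div_nonneg hξ hη.le]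
  refine ⟨hmixed, fun (hU : U ≤ 1) hsqrt => ?_⟩
  show U - 2 * √ξ ≤ principalUtility w F r (mixLinear r η p) a'
  rw [hsqrt, Real.div_sqrt, ← hsqrt] at hmixed
  rw [← hsqrt]
  linarith [mul_le_mul_of_nonneg_left hU hη.le]

/-- ξ-IC to IC conversion for ambiguous contracts: perturbing the contracts with
a linear contract of weight η and letting the agent exactly best respond loses
at most ξ/η + η·U of the principal's utility; with η = √ξ and U ≤ 1 the loss is
at most 2√ξ. -/
theorem stmt_1 {Θ : Type} [Fintype Θ] {n m : ℕ}
    (w : Θ → ℝ) (F : Θ → Fin n → Fin m → ℝ) (c : Fin n → ℝ) (r : Fin m → ℝ)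
    (p : Θ → Fin m → ℝ) (ξ η : ℝ) (a a' : Fin n)
    (hw : ∀ θ, 0 ≤ w θ) (hξ : 0 ≤ ξ) (hη : 0 < η) (hη1 : η ≤ 1)
    (hc : ∀ i, 0 ≤ c i ∧ c i ≤ 1) (hr : ∀ j, 0 ≤ r j ∧ r j ≤ 1)
    (hξIC : ∀ i, ∑ θ, w θ * ((∑ j, F θ a j * p θ j) - c a) ≥
                 ∑ θ, w θ * ((∑ j, F θ i j * p θ j) - c i) - ξ)
    (pbar : Θ → Fin m → ℝ)
    (hpbar : ∀ θ j, pbar θ j = (1 - η) * p θ j + η * r j)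
    (hbr : ∀ i, ∑ θ, w θ * ((∑ j, F θ a' j * pbar θ j) - c a') ≥
                ∑ θ, w θ * ((∑ j, F θ i j * pbar θ j) - c i)) :
    (∑ θ, w θ * (∑ j, F θ a' j * (r j - pbar θ j)) ≥
      ∑ θ, w θ * (∑ j, F θ a j * (r j - p θ j)) - ξ/η -
        η * ∑ θ, w θ * (∑ j, F θ a j * (r j - p θ j))) ∧
    ((∑ θ, w θ * (∑ j, F θ a j * (r j - p θ j)) ≤ 1) → η = Real.sqrt ξ →
      ∑ θ, w θ * (∑ j, F θ a' j * (r j - pbar θ j)) ≥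
        ∑ θ, w θ * (∑ j, F θ a j * (r j - p θ j)) - 2 * Real.sqrt ξ) :=
  stmt_1_general w F c r p ξ η a a' hξ hη hη1 hξIC pbar hpbar hbr
end

section
/- Let (a, p) be a single-contract pair and w_θ = μ(θ)π(s|θ) weights under a signal s such that (a, p) is 2δ-IC: ∑_θ w_θ ⟨F^θ_a, p⟩ − c_a ≥ ∑_θ w_θ ⟨F^θ_i, p⟩ − c_i − 2δ for all i, where the weights sum to 1. For η ∈ (0,1), set p̄ = (1−η)p + η r and let ā be an exact best response to p̄. Then the principal's utility satisfies ∑_θ w_θ ⟨F^θ_ā, r − p̄⟩ ≥ ∑_θ w_θ ⟨F^θ_a, r − p⟩ − 2δ/η − η. In particular, with η = √δ, the loss is at most 3√δ. -/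
/-!
Write `P i` and `R i` for the expected payment and expected reward of action `i`. Paying
`p̄ = (1 - η) p + η r` gives the agent an extra `η (R i - P i)` on top of its utility under `p`,
so adding the best-response inequality for `ā` under `p̄` to the `2δ`-IC inequality of `a` under
`p` yields `η (R ā - P ā) ≥ η (R a - P a) - 2δ`. The principal keeps `(1 - η) (R ā - P ā)` under
`p̄`, and the factor `1 - η` costs at most `η` because `R a - P a ≤ 1`.
-/

open Finset

section

variable {Θ ι Ω : Type*} [Fintype Θ] [Fintype Ω]

def expectedValue (w : Θ → ℝ) (F : Θ → ι → Ω → ℝ) (i : ι) (x : Ω → ℝ) : ℝ :=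
  ∑ θ, w θ * ∑ j, F θ i j * x j

theorem expectedValue_of_forall_eq_add {w : Θ → ℝ} {F : Θ → ι → Ω → ℝ} {i : ι}
    {x y z : Ω → ℝ} (s t : ℝ) (h : ∀ j, z j = s * x j + t * y j) :
    expectedValue w F i z = s * expectedValue w F i x + t * expectedValue w F i y := by
  simp only [expectedValue, h, mul_add, sum_add_distrib, mul_sum]
  congr 1 <;> exact sum_congr rfl fun _ _ => sum_congr rfl fun _ _ => by ring

end

section

variable {ι : Type*} {P R c : ι → ℝ} {a b : ι} {δ η : ℝ}

theorem utility_ge_of_bestResponse_perturbed (hη : 0 < η)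
    (hIC : P b - c b - 2 * δ ≤ P a - c a)
    (hbr : (1 - η) * P a + η * R a - c a ≤ (1 - η) * P b + η * R b - c b) :
    R a - P a - 2 * δ / η ≤ R b - P b := by
  have hgap : η * (R a - P a) - 2 * δ ≤ η * (R b - P b) := by linarith
  rw [sub_div' hη.ne', div_le_iff₀ hη]
  linarith

theorem perturbed_utility_ge (hδ : 0 ≤ δ) (hη : 0 < η) (hη1 : η < 1)
    (hU : R a - P a ≤ 1) (hIC : P b - c b - 2 * δ ≤ P a - c a)
    (hbr : (1 - η) * P a + η * R a - c a ≤ (1 - η) * P b + η * R b - c b) :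
    R a - P a - 2 * δ / η - η ≤ (1 - η) * (R b - P b) := by
  have hgap := utility_ge_of_bestResponse_perturbed hη hIC hbr
  have hδη : 0 ≤ 2 * δ / η := by positivity
  nlinarith [mul_le_mul_of_nonneg_left hgap (sub_nonneg.2 hη1.le)]

end

theorem stmt_2_general {Θ : Type} [Fintype Θ] {n m : ℕ}
    (w : Θ → ℝ) (F : Θ → Fin n → Fin m → ℝ) (c : Fin n → ℝ) (r : Fin m → ℝ)
    (p : Fin m → ℝ) (δ η : ℝ) (a abar : Fin n)
    (hδ : 0 ≤ δ) (hη : 0 < η) (hη1 : η < 1)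
    (hU : ∑ θ, w θ * (∑ j, F θ a j * (r j - p j)) ≤ 1)
    (h2δIC : ∀ i, (∑ θ, w θ * (∑ j, F θ a j * p j)) - c a ≥
                  (∑ θ, w θ * (∑ j, F θ i j * p j)) - c i - 2*δ)
    (pbar : Fin m → ℝ)
    (hpbar : ∀ j, pbar j = (1 - η) * p j + η * r j)
    (hbr : ∀ i, (∑ θ, w θ * (∑ j, F θ abar j * pbar j)) - c abar ≥
                (∑ θ, w θ * (∑ j, F θ i j * pbar j)) - c i) :
    (∑ θ, w θ * (∑ j, F θ abar j * (r j - pbar j)) ≥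
      ∑ θ, w θ * (∑ j, F θ a j * (r j - p j)) - 2*δ/η - η) ∧
    (η = Real.sqrt δ →
      ∑ θ, w θ * (∑ j, F θ abar j * (r j - pbar j)) ≥
        ∑ θ, w θ * (∑ j, F θ a j * (r j - p j)) - 3 * Real.sqrt δ) := by
  set P := fun i => expectedValue w F i p
  set R := fun i => expectedValue w F i r
  have hpay : ∀ i, expectedValue w F i pbar = (1 - η) * P i + η * R i := fun i =>
    expectedValue_of_forall_eq_add _ _ hpbar
  have hgain : expectedValue w F a (r - p) = R a - P a := by
    rw [expectedValue_of_forall_eq_add (x := r) (y := p) 1 (-1) fun j => by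
      simp only [Pi.sub_apply]; ring]
    ring
  have hloss : expectedValue w F abar (r - pbar) = (1 - η) * (R abar - P abar) := by
    rw [expectedValue_of_forall_eq_add (x := r) (y := p) (1 - η) (-(1 - η)) fun j => by
      simp only [Pi.sub_apply, hpbar]; ring]
    ring
  have hU' : R a - P a ≤ 1 := hgain ▸ hU
  have hbr' := hbr a
  change expectedValue w F abar pbar - _ ≥ expectedValue w F a pbar - _ at hbr'
  rw [hpay, hpay] at hbr'
  have main := perturbed_utility_ge hδ hη hη1 hU' (h2δIC abar) hbr'
  change expectedValue w F abar (r - pbar) ≥ expectedValue w F a (r - p) - _ - _ ∧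
    (_ → expectedValue w F abar (r - pbar) ≥ expectedValue w F a (r - p) - _)
  rw [hgain, hloss]
  refine ⟨main, fun hsqrt => ?_⟩
  subst hsqrt
  rw [mul_div_assoc, Real.div_sqrt] at main
  linarith

/-- 2δ-IC to IC conversion for a single contract under a posterior: perturbing
the contract towards the linear contract r and best responding loses at most
2δ/η + η; with η = √δ the loss is at most 3√δ. -/
theorem stmt_2 {Θ : Type} [Fintype Θ] {n m : ℕ}
    (w : Θ → ℝ) (F : Θ → Fin n → Fin m → ℝ) (c : Fin n → ℝ) (r : Fin m → ℝ)
    (p : Fin m → ℝ) (δ η : ℝ) (a abar : Fin n)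
    (hw : ∀ θ, 0 ≤ w θ) (hw1 : ∑ θ, w θ = 1)
    (hδ : 0 ≤ δ) (hη : 0 < η) (hη1 : η < 1)
    (hU : ∑ θ, w θ * (∑ j, F θ a j * (r j - p j)) ≤ 1)
    (h2δIC : ∀ i, (∑ θ, w θ * (∑ j, F θ a j * p j)) - c a ≥
                  (∑ θ, w θ * (∑ j, F θ i j * p j)) - c i - 2*δ)
    (pbar : Fin m → ℝ)
    (hpbar : ∀ j, pbar j = (1 - η) * p j + η * r j)
    (hbr : ∀ i, (∑ θ, w θ * (∑ j, F θ abar j * pbar j)) - c abar ≥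
                (∑ θ, w θ * (∑ j, F θ i j * pbar j)) - c i) :
    (∑ θ, w θ * (∑ j, F θ abar j * (r j - pbar j)) ≥
      ∑ θ, w θ * (∑ j, F θ a j * (r j - p j)) - 2*δ/η - η) ∧
    (η = Real.sqrt δ →
      ∑ θ, w θ * (∑ j, F θ abar j * (r j - pbar j)) ≥
        ∑ θ, w θ * (∑ j, F θ a j * (r j - p j)) - 3 * Real.sqrt δ) :=
  stmt_2_general w F c r p δ η a abar hδ hη hη1 hU h2δIC pbar hpbar hbr
end

section
/- Suppose nonnegative reals (ρ_v)_{v∈V} indexed by a finite set V and constants δ > 0, k̂ > 0 satisfy ρ_v ≤ (1/(2k̂))·S − 11/(320·δ·k̂) for all v ∈ V, where S = ∑_{v∈V} ρ_v. Define V̂ = {v ∈ V : ρ_v ≥ S/(4|V|)}. If S > 0 then |V̂| ≥ (3/2)·k̂. -/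
open Finset

lemma sum_le_card_filter_le_mul_add_card_mul {ι : Type*} (s : Finset ι) (f : ι → ℝ) {t M : ℝ}
    [DecidablePred fun i => t ≤ f i] (ht : 0 ≤ t) (hM : ∀ i ∈ s, f i ≤ M) :
    ∑ i ∈ s, f i ≤ #(s.filter fun i => t ≤ f i) * M + #s * t := by
  rw [← sum_filter_add_sum_filter_not s (fun i => t ≤ f i)]
  gcongr
  · simpa using sum_le_card_nsmul _ _ _ fun i hi => hM i (mem_filter.1 hi).1
  · calc ∑ i ∈ s.filter (fun i => ¬ t ≤ f i), f i
        ≤ #(s.filter fun i => ¬ t ≤ f i) * t := by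
          simpa using sum_le_card_nsmul (s.filter fun i => ¬ t ≤ f i) f t
            fun i hi => (not_le.1 (mem_filter.1 hi).2).le
      _ ≤ #s * t := by gcongr; exact filter_subset _ _

open scoped Classical in
theorem stmt_5_general {V : Type} [Fintype V]
    (ρ : V → ℝ) (δ khat : ℝ) (hδ : 0 < δ) (hk : 0 < khat)
    (hub : ∀ v, ρ v ≤ (1/(2*khat)) * (∑ u, ρ u) - 11/(320*δ*khat))
    (hS : 0 < ∑ u, ρ u) :
    (3/2 : ℝ) * khat ≤
      ((Finset.univ.filter
        fun v => (∑ u, ρ u) / (4 * (Fintype.card V : ℝ)) ≤ ρ v).card : ℝ) := by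
  set S := ∑ u, ρ u
  have hV : 0 < (Fintype.card V : ℝ) := by
    obtain ⟨v, -, -⟩ := exists_ne_zero_of_sum_ne_zero hS.ne'
    exact_mod_cast Fintype.card_pos_iff.2 ⟨v⟩
  have hmax : ∀ v ∈ univ, ρ v ≤ S / (2 * khat) := fun v _ => by
    have : 0 < 11 / (320 * δ * khat) := by positivity
    linarith [hub v, one_div_mul_eq_div (2 * khat) S]
  have hsplit := sum_le_card_filter_le_mul_add_card_mul univ ρ
    (div_nonneg hS.le (by positivity : (0 : ℝ) ≤ 4 * Fintype.card V)) hmax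
  have hlight : (Fintype.card V : ℝ) * (S / (4 * Fintype.card V)) = S / 4 := by field_simp
  rw [card_univ, hlight] at hsplit
  set A := #(univ.filter fun v => S / (4 * (Fintype.card V : ℝ)) ≤ ρ v)
  have hscaled : 3 / 2 * khat * S ≤ A * S := by
    field_simp at hsplit
    nlinarith
  exact le_of_mul_le_mul_right hscaled hS

open scoped Classical in
/-- The set of "heavy" vertices (those with ρ_v at least S/(4|V|)) has size at
least (3/2)·k̂, given that every ρ_v is at most S/(2k̂) − 11/(320δk̂). -/
theorem stmt_5 {V : Type} [Fintype V]
    (ρ : V → ℝ) (δ khat : ℝ) (hδ : 0 < δ) (hk : 0 < khat)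
    (hρ : ∀ v, 0 ≤ ρ v)
    (hub : ∀ v, ρ v ≤ (1/(2*khat)) * (∑ u, ρ u) - 11/(320*δ*khat))
    (hS : 0 < ∑ u, ρ u) :
    (3/2 : ℝ) * khat ≤
      ((Finset.univ.filter
        fun v => (∑ u, ρ u) / (4 * (Fintype.card V : ℝ)) ≤ ρ v).card : ℝ) :=
  stmt_5_general ρ δ khat hδ hk hub hS
end

section
/- In the joint design problem with a single explicit contract, the optimal value is attained: there exists an optimal pair (π*, p*) (a signaling scheme and a single contract) maximizing the principal's expected utility, and moreover it can be taken to be a direct mechanism with at most n signals, each inducing a distinct best-response action. -/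
/-!
Merging all signals that recommend the same action keeps a mechanism feasible and leaves its
value unchanged, so direct mechanisms suffice. In a direct mechanism of nonnegative value the
principal's revenue is at most `1`, so the recommended actions cost at most `1` in expected
payments, and obedience bounds the expected payment of every action after every signal by `2`.
Hence the payment on an outcome that some state and action produce with positive probability is
bounded, while the payments on the other outcomes are irrelevant and may be capped. The feasible
direct mechanisms with capped payments form a compact set on which the principal's utility is
continuous; it contains the babbling mechanism with zero payments, whose value is nonnegative, so
a maximiser over this set is optimal among all mechanisms.
-/

open Finset

namespace SignalingContract

variable {Θ A O S : Type*} [Fintype Θ] [Fintype O] [Fintype S]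
  (μ : Θ → ℝ) (F : Θ → A → O → ℝ) (c : A → ℝ) (r : O → ℝ)

def IsSignalingScheme (π : Θ → S → ℝ) : Prop :=
  (∀ θ s, 0 ≤ π θ s) ∧ ∀ θ, ∑ s, π θ s = 1

/- The utilities after a signal `s` are not normalised by the probability of `s`. -/
def agentUtility (π : Θ → S → ℝ) (p : O → ℝ) (s : S) (i : A) : ℝ :=
  ∑ θ, μ θ * π θ s * ((∑ j, F θ i j * p j) - c i)

def principalUtility (π : Θ → S → ℝ) (p : O → ℝ) (a : S → A) : ℝ :=
  ∑ s, ∑ θ, μ θ * π θ s * ∑ j, F θ (a s) j * (r j - p j)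

def IsFeasible (π : Θ → S → ℝ) (p : O → ℝ) (a : S → A) : Prop :=
  IsSignalingScheme π ∧ (∀ j, 0 ≤ p j) ∧
    ∀ s i, agentUtility μ F c π p s i ≤ agentUtility μ F c π p s (a s)

def signalProb (π : Θ → S → ℝ) (s : S) : ℝ :=
  ∑ θ, μ θ * π θ s

def expectedTransfer (π : Θ → S → ℝ) (q : O → ℝ) (s : S) (i : A) : ℝ :=
  ∑ θ, μ θ * π θ s * ∑ j, F θ i j * q j

omit [Fintype Θ] in
theorem IsSignalingScheme.le_one {π : Θ → S → ℝ} (hπ : IsSignalingScheme π) (θ : Θ) (s : S) :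
    π θ s ≤ 1 :=
  hπ.2 θ ▸ single_le_sum (fun s _ => hπ.1 θ s) (mem_univ s)

section Expectations

variable {μ F c r}

theorem signalProb_nonneg (hμ0 : ∀ θ, 0 ≤ μ θ) {π : Θ → S → ℝ} (hπ : IsSignalingScheme π)
    (s : S) : 0 ≤ signalProb μ π s :=
  sum_nonneg fun θ _ => mul_nonneg (hμ0 θ) (hπ.1 θ s)

theorem sum_signalProb (hμ1 : ∑ θ, μ θ = 1) {π : Θ → S → ℝ} (hπ : IsSignalingScheme π) :
    ∑ s, signalProb μ π s = 1 := by
  simp only [signalProb]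
  rw [sum_comm]
  simp only [← mul_sum, hπ.2, mul_one, hμ1]

theorem signalProb_le_one (hμ0 : ∀ θ, 0 ≤ μ θ) (hμ1 : ∑ θ, μ θ = 1) {π : Θ → S → ℝ}
    (hπ : IsSignalingScheme π) (s : S) : signalProb μ π s ≤ 1 :=
  sum_signalProb hμ1 hπ ▸ single_le_sum (fun s _ => signalProb_nonneg hμ0 hπ s) (mem_univ s)

omit [Fintype S] in
theorem agentUtility_eq (π : Θ → S → ℝ) (p : O → ℝ) (s : S) (i : A) :
    agentUtility μ F c π p s i = expectedTransfer μ F π p s i - c i * signalProb μ π s := by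
  simp only [agentUtility, expectedTransfer, signalProb, mul_sub, sum_sub_distrib, mul_sum]
  congr 1
  exact sum_congr rfl fun θ _ => by ring

theorem sum_expectedTransfer {π : Θ → S → ℝ} (hπ : IsSignalingScheme π) (q : O → ℝ) (i : A) :
    ∑ s, expectedTransfer μ F π q s i = ∑ θ, μ θ * ∑ j, F θ i j * q j := by
  simp only [expectedTransfer]
  rw [sum_comm]
  exact sum_congr rfl fun θ _ => by rw [← sum_mul, ← mul_sum, hπ.2 θ, mul_one]

theorem expectedTransfer_nonneg (hμ0 : ∀ θ, 0 ≤ μ θ) (hF0 : ∀ θ i j, 0 ≤ F θ i j)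
    {π : Θ → S → ℝ} (hπ : IsSignalingScheme π) {q : O → ℝ} (hq : ∀ j, 0 ≤ q j) (s : S) (i : A) :
    0 ≤ expectedTransfer μ F π q s i :=
  sum_nonneg fun θ _ => mul_nonneg (mul_nonneg (hμ0 θ) (hπ.1 θ s))
    (sum_nonneg fun j _ => mul_nonneg (hF0 θ i j) (hq j))

theorem expectedTransfer_le_signalProb (hμ0 : ∀ θ, 0 ≤ μ θ) (hF0 : ∀ θ i j, 0 ≤ F θ i j)
    (hF1 : ∀ θ i, ∑ j, F θ i j = 1) {π : Θ → S → ℝ} (hπ : IsSignalingScheme π) {q : O → ℝ}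
    (hq : ∀ j, q j ≤ 1) (s : S) (i : A) :
    expectedTransfer μ F π q s i ≤ signalProb μ π s := by
  refine sum_le_sum fun θ _ => mul_le_of_le_one_right (mul_nonneg (hμ0 θ) (hπ.1 θ s)) ?_
  calc ∑ j, F θ i j * q j ≤ ∑ j, F θ i j :=
        sum_le_sum fun j _ => mul_le_of_le_one_right (hF0 θ i j) (hq j)
    _ = 1 := hF1 θ i

theorem principalUtility_nonneg (hμ0 : ∀ θ, 0 ≤ μ θ) (hF0 : ∀ θ i j, 0 ≤ F θ i j)
    {π : Θ → S → ℝ} (hπ : IsSignalingScheme π) {p : O → ℝ} (hpr : ∀ j, p j ≤ r j) (a : S → A) :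
    0 ≤ principalUtility μ F r π p a :=
  sum_nonneg fun s _ => sum_nonneg fun θ _ => mul_nonneg (mul_nonneg (hμ0 θ) (hπ.1 θ s))
    (sum_nonneg fun j _ => mul_nonneg (hF0 θ (a s) j) (sub_nonneg.2 (hpr j)))

variable {p p' : O → ℝ} (hpp' : ∀ θ i j, μ θ * F θ i j * p' j = μ θ * F θ i j * p j)
include hpp'

omit [Fintype Θ] in
theorem mul_sum_payment_congr (θ : Θ) (i : A) :
    μ θ * ∑ j, F θ i j * p' j = μ θ * ∑ j, F θ i j * p j := by
  simp only [mul_sum, ← mul_assoc, hpp']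

omit [Fintype S] in
theorem agentUtility_congr_payment (π : Θ → S → ℝ) (s : S) (i : A) :
    agentUtility μ F c π p' s i = agentUtility μ F c π p s i :=
  sum_congr rfl fun θ _ => by linear_combination π θ s * mul_sum_payment_congr hpp' θ i

theorem principalUtility_congr_payment (π : Θ → S → ℝ) (a : S → A) :
    principalUtility μ F r π p' a = principalUtility μ F r π p a := by
  refine sum_congr rfl fun s _ => sum_congr rfl fun θ _ => ?_
  simp only [mul_sub, sum_sub_distrib]
  linear_combination -π θ s * mul_sum_payment_congr hpp' θ (a s)

theorem IsFeasible.congr_payment {π : Θ → S → ℝ} {a : S → A} (h : IsFeasible μ F c π p a)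
    (hp' : ∀ j, 0 ≤ p' j) : IsFeasible μ F c π p' a :=
  ⟨h.1, hp', fun s i => by simpa only [agentUtility_congr_payment hpp'] using h.2.2 s i⟩

end Expectations

section Merging

variable [DecidableEq A]

def mergeSignals (a : S → A) (π : Θ → S → ℝ) (θ : Θ) (i : A) : ℝ :=
  ∑ s with a s = i, π θ s

theorem sum_mul_mergeSignals (a : S → A) (π : Θ → S → ℝ) (i : A) (X : Θ → ℝ) :
    ∑ θ, μ θ * mergeSignals a π θ i * X θ = ∑ s with a s = i, ∑ θ, μ θ * π θ s * X θ := by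
  simp only [mergeSignals, mul_sum, sum_mul]
  exact sum_comm

theorem agentUtility_mergeSignals (a : S → A) (π : Θ → S → ℝ) (p : O → ℝ) (i k : A) :
    agentUtility μ F c (mergeSignals a π) p i k = ∑ s with a s = i, agentUtility μ F c π p s k :=
  sum_mul_mergeSignals μ a π i _

variable [Fintype A]

theorem principalUtility_mergeSignals (a : S → A) (π : Θ → S → ℝ) (p : O → ℝ) :
    principalUtility μ F r (mergeSignals a π) p id = principalUtility μ F r π p a := by
  set G : A → S → ℝ := fun i s => ∑ θ, μ θ * π θ s * ∑ j, F θ i j * (r j - p j)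
  calc principalUtility μ F r (mergeSignals a π) p id
      = ∑ i, ∑ s with a s = i, G i s := sum_congr rfl fun i _ => sum_mul_mergeSignals μ a π i _
    _ = ∑ i, ∑ s with a s = i, G (a s) s :=
        sum_congr rfl fun i _ => sum_congr rfl fun s hs => by rw [(mem_filter.1 hs).2]
    _ = principalUtility μ F r π p a := sum_fiberwise univ a fun s => G (a s) s

omit [Fintype Θ] in
theorem IsSignalingScheme.mergeSignals {π : Θ → S → ℝ} (hπ : IsSignalingScheme π) (a : S → A) :
    IsSignalingScheme (SignalingContract.mergeSignals a π) :=
  ⟨fun θ _ => sum_nonneg fun s _ => hπ.1 θ s,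
    fun θ => (sum_fiberwise univ a (π θ)).trans (hπ.2 θ)⟩

theorem IsFeasible.mergeSignals {π : Θ → S → ℝ} {p : O → ℝ} {a : S → A}
    (h : IsFeasible μ F c π p a) : IsFeasible μ F c (SignalingContract.mergeSignals a π) p id := by
  refine ⟨h.1.mergeSignals a, h.2.1, fun i k => ?_⟩
  simp only [agentUtility_mergeSignals, id]
  exact sum_le_sum fun s hs => (mem_filter.1 hs).2 ▸ h.2.2 s k

end Merging

variable [Fintype A]

section PaymentBound

variable {μ F c r}

theorem principalUtility_id_eq (π : Θ → A → ℝ) (p : O → ℝ) :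
    principalUtility μ F r π p id =
      ∑ s, (expectedTransfer μ F π r s s - expectedTransfer μ F π p s s) := by
  simp only [principalUtility, expectedTransfer, id, mul_sub, sum_sub_distrib]

variable (hμ0 : ∀ θ, 0 ≤ μ θ) (hμ1 : ∑ θ, μ θ = 1) (hF0 : ∀ θ i j, 0 ≤ F θ i j)
  (hF1 : ∀ θ i, ∑ j, F θ i j = 1) (hc0 : ∀ i, 0 ≤ c i) (hc1 : ∀ i, c i ≤ 1) (hr1 : ∀ j, r j ≤ 1)
include hμ0 hμ1 hF0 hF1 hc0 hc1 hr1

theorem expectedTransfer_le_two {π : Θ → A → ℝ} {p : O → ℝ} (h : IsFeasible μ F c π p id)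
    (hV : 0 ≤ principalUtility μ F r π p id) (s i : A) : expectedTransfer μ F π p s i ≤ 2 := by
  have hrevenue : ∑ s, expectedTransfer μ F π r s s ≤ 1 :=
    (sum_le_sum fun s _ => expectedTransfer_le_signalProb hμ0 hF0 hF1 h.1 hr1 s s).trans
      (sum_signalProb hμ1 h.1).le
  have hpaid : expectedTransfer μ F π p s s ≤ 1 := by
    rw [principalUtility_id_eq, sum_sub_distrib] at hV
    exact (single_le_sum (fun s _ => expectedTransfer_nonneg hμ0 hF0 h.1 h.2.1 s s)
      (mem_univ s)).trans (by linarith)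
  have hobey := h.2.2 s i
  rw [agentUtility_eq, agentUtility_eq] at hobey
  have hP0 := signalProb_nonneg hμ0 h.1 s
  have hci : c i * signalProb μ π s ≤ 1 :=
    (mul_le_of_le_one_left hP0 (hc1 i)).trans (signalProb_le_one hμ0 hμ1 h.1 s)
  have hcs : 0 ≤ c s * signalProb μ π s := mul_nonneg (hc0 s) hP0
  dsimp only [id] at hobey
  linarith

theorem mul_payment_le {π : Θ → A → ℝ} {p : O → ℝ} (h : IsFeasible μ F c π p id)
    (hV : 0 ≤ principalUtility μ F r π p id) (θ : Θ) (i : A) (j : O) :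
    μ θ * F θ i j * p j ≤ 2 * Fintype.card A := by
  have hpay : ∀ θ, 0 ≤ μ θ * ∑ j, F θ i j * p j := fun θ =>
    mul_nonneg (hμ0 θ) (sum_nonneg fun j _ => mul_nonneg (hF0 θ i j) (h.2.1 j))
  calc μ θ * F θ i j * p j = μ θ * (F θ i j * p j) := mul_assoc _ _ _
    _ ≤ μ θ * ∑ j, F θ i j * p j := mul_le_mul_of_nonneg_left
        (single_le_sum (fun j _ => mul_nonneg (hF0 θ i j) (h.2.1 j)) (mem_univ j)) (hμ0 θ)
    _ ≤ ∑ θ, μ θ * ∑ j, F θ i j * p j := single_le_sum (fun θ _ => hpay θ) (mem_univ θ)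
    _ = ∑ s, expectedTransfer μ F π p s i := (sum_expectedTransfer h.1 p i).symm
    _ ≤ ∑ _s : A, 2 :=
        sum_le_sum fun s _ => expectedTransfer_le_two hμ0 hμ1 hF0 hF1 hc0 hc1 hr1 h hV s i
    _ = 2 * Fintype.card A := by rw [sum_const, card_univ, nsmul_eq_mul, mul_comm]

end PaymentBound

/- Outcomes that no state and action produce with positive probability contribute `0` here
(`x / 0 = 0`); the payments on them do not affect any utility. -/
noncomputable def paymentCap : ℝ :=
  ∑ t : Θ × A × O, 2 * Fintype.card A / (μ t.1 * F t.1 t.2.1 t.2.2)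

section Capping

variable {μ F}

theorem paymentCap_nonneg (hμ0 : ∀ θ, 0 ≤ μ θ) (hF0 : ∀ θ i j, 0 ≤ F θ i j) :
    0 ≤ paymentCap μ F :=
  sum_nonneg fun t _ => div_nonneg (by positivity) (mul_nonneg (hμ0 _) (hF0 _ _ _))

theorem mul_min_paymentCap (hμ0 : ∀ θ, 0 ≤ μ θ) (hF0 : ∀ θ i j, 0 ≤ F θ i j) {p : O → ℝ}
    (hp : ∀ θ i j, μ θ * F θ i j * p j ≤ 2 * Fintype.card A) (θ : Θ) (i : A) (j : O) :
    μ θ * F θ i j * min (p j) (paymentCap μ F) = μ θ * F θ i j * p j := by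
  rcases (mul_nonneg (hμ0 θ) (hF0 θ i j)).eq_or_lt with hzero | hpos
  · rw [← hzero, zero_mul, zero_mul]
  · rw [min_eq_left]
    calc p j ≤ 2 * Fintype.card A / (μ θ * F θ i j) := (le_div_iff₀' hpos).2 (hp θ i j)
      _ ≤ paymentCap μ F :=
        single_le_sum (f := fun t : Θ × A × O => 2 * Fintype.card A / (μ t.1 * F t.1 t.2.1 t.2.2))
          (fun t _ => div_nonneg (by positivity) (mul_nonneg (hμ0 _) (hF0 _ _ _)))
          (mem_univ (θ, i, j))

end Capping

theorem isClosed_setOf_isFeasible_id :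
    IsClosed {x : (Θ → A → ℝ) × (O → ℝ) | IsFeasible μ F c x.1 x.2 id} := by
  simp only [IsFeasible, IsSignalingScheme, agentUtility, id, Set.ofPred_and, Set.ofPred_forall]
  refine ((isClosed_iInter fun θ => isClosed_iInter fun s => isClosed_le ?_ ?_).inter
    (isClosed_iInter fun θ => isClosed_eq ?_ ?_)).inter
    ((isClosed_iInter fun j => isClosed_le ?_ ?_).inter
    (isClosed_iInter fun s => isClosed_iInter fun i => isClosed_le ?_ ?_)) <;> fun_prop

theorem isCompact_setOf_isFeasible_id_le (B : ℝ) :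
    IsCompact {x : (Θ → A → ℝ) × (O → ℝ) | IsFeasible μ F c x.1 x.2 id ∧ ∀ j, x.2 j ≤ B} := by
  refine (isCompact_Icc (a := (0, 0)) (b := (1, fun _ => B))).of_isClosed_subset ?_ ?_
  · rw [Set.ofPred_and, Set.ofPred_forall]
    exact (isClosed_setOf_isFeasible_id μ F c).inter
      (isClosed_iInter fun j => isClosed_le (by fun_prop) continuous_const)
  · rintro ⟨π, p⟩ ⟨⟨hπ, hp, -⟩, hpB⟩
    exact ⟨⟨hπ.1, hp⟩, ⟨hπ.le_one, hpB⟩⟩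

theorem continuous_principalUtility_id :
    Continuous fun x : (Θ → A → ℝ) × (O → ℝ) => principalUtility μ F r x.1 x.2 id := by
  unfold principalUtility
  fun_prop

section Optimum

variable {μ F c r}

theorem isFeasible_babbling [DecidableEq A] (hμ0 : ∀ θ, 0 ≤ μ θ) {a₀ : A}
    (ha₀ : ∀ i, c a₀ ≤ c i) : IsFeasible μ F c (fun _ => Pi.single a₀ 1) 0 id := by
  have hπ : IsSignalingScheme (fun (_ : Θ) => Pi.single (M := fun _ : A => ℝ) a₀ 1) :=
    ⟨fun θ s => by by_cases hs : s = a₀ <;> simp [hs], fun θ => by simp⟩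
  refine ⟨hπ, fun _ => le_rfl, fun s i => ?_⟩
  simp only [agentUtility_eq, expectedTransfer, Pi.zero_apply, mul_zero, sum_const_zero,
    zero_sub, id, neg_le_neg_iff]
  by_cases hs : s = a₀
  · subst hs
    exact mul_le_mul_of_nonneg_right (ha₀ i) (signalProb_nonneg hμ0 hπ s)
  · simp [signalProb, hs]

theorem exists_optimal_direct_mechanism [Nonempty A] (hμ0 : ∀ θ, 0 ≤ μ θ)
    (hμ1 : ∑ θ, μ θ = 1) (hF0 : ∀ θ i j, 0 ≤ F θ i j) (hF1 : ∀ θ i, ∑ j, F θ i j = 1)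
    (hc0 : ∀ i, 0 ≤ c i) (hc1 : ∀ i, c i ≤ 1) (hr0 : ∀ j, 0 ≤ r j) (hr1 : ∀ j, r j ≤ 1) :
    ∃ (π : Θ → A → ℝ) (p : O → ℝ), IsFeasible μ F c π p id ∧
      ∀ {S : Type*} [Fintype S] (π' : Θ → S → ℝ) (p' : O → ℝ) (a : S → A),
        IsFeasible μ F c π' p' a →
          principalUtility μ F r π' p' a ≤ principalUtility μ F r π p id := by
  classical
  obtain ⟨a₀, -, ha₀⟩ := exists_min_image univ c univ_nonempty
  have hbabble := isFeasible_babbling (F := F) hμ0 fun i => ha₀ i (mem_univ i)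
  have hcap0 := paymentCap_nonneg hμ0 hF0
  set K := {x : (Θ → A → ℝ) × (O → ℝ) | IsFeasible μ F c x.1 x.2 id ∧ ∀ j, x.2 j ≤ paymentCap μ F}
  have hbabbleK : ((fun _ => Pi.single a₀ 1, 0) : (Θ → A → ℝ) × (O → ℝ)) ∈ K :=
    ⟨hbabble, fun _ => hcap0⟩
  obtain ⟨x, ⟨hx, -⟩, hmax⟩ := (isCompact_setOf_isFeasible_id_le μ F c _).exists_isMaxOn
    ⟨_, hbabbleK⟩ (continuous_principalUtility_id μ F r).continuousOn
  refine ⟨x.1, x.2, hx, fun π p a h => ?_⟩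
  rw [← principalUtility_mergeSignals]
  have hdirect := h.mergeSignals
  rcases le_or_gt 0 (principalUtility μ F r (mergeSignals a π) p id) with hV | hV
  · have hcap := mul_min_paymentCap hμ0 hF0
      (mul_payment_le hμ0 hμ1 hF0 hF1 hc0 hc1 hr1 hdirect hV)
    have hcappedK : (mergeSignals a π, fun j => min (p j) (paymentCap μ F)) ∈ K :=
      ⟨hdirect.congr_payment hcap fun j => le_min (hdirect.2.1 j) hcap0, fun _ => min_le_right _ _⟩
    rw [← principalUtility_congr_payment hcap]
    exact isMaxOn_iff.1 hmax _ hcappedK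
  · exact hV.le.trans ((principalUtility_nonneg hμ0 hF0 hbabble.1 hr0 id).trans
      (isMaxOn_iff.1 hmax _ hbabbleK))

end Optimum

end SignalingContract

theorem stmt_10_general {Θ : Type} [Fintype Θ] {n m : ℕ}
    (μ : Θ → ℝ) (F : Θ → Fin (n+1) → Fin m → ℝ) (c : Fin (n+1) → ℝ)
    (r : Fin m → ℝ)
    (hμ0 : ∀ θ, 0 ≤ μ θ) (hμ1 : ∑ θ, μ θ = 1)
    (hF0 : ∀ θ i j, 0 ≤ F θ i j) (hF1 : ∀ θ i, ∑ j, F θ i j = 1)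
    (hc : ∀ i, 0 ≤ c i ∧ c i ≤ 1)
    (hr : ∀ j, 0 ≤ r j ∧ r j ≤ 1) :
    ∃ (πstar : Θ → Fin (n+1) → ℝ) (pstar : Fin m → ℝ),
      (∀ θ s, 0 ≤ πstar θ s) ∧ (∀ θ, ∑ s, πstar θ s = 1) ∧ (∀ j, 0 ≤ pstar j) ∧
      (∀ s i : Fin (n+1),
        ∑ θ, μ θ * πstar θ s * ((∑ j, F θ s j * pstar j) - c s) ≥
        ∑ θ, μ θ * πstar θ s * ((∑ j, F θ i j * pstar j) - c i)) ∧
      (∀ (S : Type) [Fintype S], ∀ (π : Θ → S → ℝ) (p : Fin m → ℝ)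
          (a : S → Fin (n+1)),
        (∀ θ s, 0 ≤ π θ s) → (∀ θ, ∑ s, π θ s = 1) → (∀ j, 0 ≤ p j) →
        (∀ s i, ∑ θ, μ θ * π θ s * ((∑ j, F θ (a s) j * p j) - c (a s)) ≥
                ∑ θ, μ θ * π θ s * ((∑ j, F θ i j * p j) - c i)) →
        ∑ s, ∑ θ, μ θ * π θ s * (∑ j, F θ (a s) j * (r j - p j)) ≤
        ∑ s, ∑ θ, μ θ * πstar θ s * (∑ j, F θ s j * (r j - pstar j))) := by
  obtain ⟨π, p, ⟨hπ, hp, hobey⟩, hopt⟩ := SignalingContract.exists_optimal_direct_mechanism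
    hμ0 hμ1 hF0 hF1 (fun i => (hc i).1) (fun i => (hc i).2) (fun j => (hr j).1) (fun j => (hr j).2)
  exact ⟨π, p, hπ.1, hπ.2, hp, hobey, fun S _ π' p' a h0 h1 hp' hobey' =>
    hopt π' p' a ⟨⟨h0, h1⟩, hp', hobey'⟩⟩

/-- The joint design problem with a single explicit contract attains its
optimum at a direct, incentive-compatible mechanism with one signal per action,
which dominates every feasible mechanism over any finite signal set. -/
theorem stmt_10 {Θ : Type} [Fintype Θ] {n m : ℕ}
    (μ : Θ → ℝ) (F : Θ → Fin (n+1) → Fin m → ℝ) (c : Fin (n+1) → ℝ)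
    (r : Fin m → ℝ)
    (hμ0 : ∀ θ, 0 ≤ μ θ) (hμ1 : ∑ θ, μ θ = 1)
    (hF0 : ∀ θ i j, 0 ≤ F θ i j) (hF1 : ∀ θ i, ∑ j, F θ i j = 1)
    (hc : ∀ i, 0 ≤ c i ∧ c i ≤ 1) (hc0 : c 0 = 0)
    (hr : ∀ j, 0 ≤ r j ∧ r j ≤ 1) :
    ∃ (πstar : Θ → Fin (n+1) → ℝ) (pstar : Fin m → ℝ),
      (∀ θ s, 0 ≤ πstar θ s) ∧ (∀ θ, ∑ s, πstar θ s = 1) ∧ (∀ j, 0 ≤ pstar j) ∧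
      (∀ s i : Fin (n+1),
        ∑ θ, μ θ * πstar θ s * ((∑ j, F θ s j * pstar j) - c s) ≥
        ∑ θ, μ θ * πstar θ s * ((∑ j, F θ i j * pstar j) - c i)) ∧
      (∀ (S : Type) [Fintype S], ∀ (π : Θ → S → ℝ) (p : Fin m → ℝ)
          (a : S → Fin (n+1)),
        (∀ θ s, 0 ≤ π θ s) → (∀ θ, ∑ s, π θ s = 1) → (∀ j, 0 ≤ p j) →
        (∀ s i, ∑ θ, μ θ * π θ s * ((∑ j, F θ (a s) j * p j) - c (a s)) ≥
                ∑ θ, μ θ * π θ s * ((∑ j, F θ i j * p j) - c i)) →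
        ∑ s, ∑ θ, μ θ * π θ s * (∑ j, F θ (a s) j * (r j - p j)) ≤
        ∑ s, ∑ θ, μ θ * πstar θ s * (∑ j, F θ s j * (r j - pstar j))) :=
  stmt_10_general μ F c r hμ0 hμ1 hF0 hF1 hc hr
end

section
/- In the joint design problem with menus of linear contracts, consider a mechanism where two signals s₁, s₂ carry the same linear-contract parameter α and induce the same best-response action a. Merging them into one signal s̄ with π(s̄|θ) = π(s₁|θ) + π(s₂|θ) and contract parameter α yields a mechanism in which a is still a best response to s̄ and the principal's utility is unchanged. Consequently, for any mechanism using contract parameters restricted to a finite set A of size 1/ε + 1, there is an equally good mechanism using at most n·(1/ε + 1) signals. -/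
/-!
For a fixed contract parameter the agent's expected utility of every action, and the principal's
expected utility, are linear in the signal's likelihood vector `θ ↦ μ θ * π θ s`. Summing signals
with the same parameter and the same recommended action therefore sums the incentive constraints
(so they stay valid) and the principal's utilities. Grouping all signals by the pair
(recommended action, parameter) leaves at most `n * |A|` signals.
-/

open Finset

section Merging

variable {Θ : Type*} [Fintype Θ] (μ : Θ → ℝ)

theorem sum_mul_add_mul_weights (w₁ w₂ u : Θ → ℝ) :
    ∑ θ, μ θ * (w₁ θ + w₂ θ) * u θ = ∑ θ, μ θ * w₁ θ * u θ + ∑ θ, μ θ * w₂ θ * u θ := by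
  rw [← sum_add_distrib]
  exact sum_congr rfl fun θ _ => by ring

theorem sum_mul_sum_weights {S : Type*} (t : Finset S) (π : Θ → S → ℝ) (u : Θ → ℝ) :
    ∑ θ, μ θ * (∑ s ∈ t, π θ s) * u θ = ∑ s ∈ t, ∑ θ, μ θ * π θ s * u θ := by
  rw [sum_comm]
  exact sum_congr rfl fun θ _ => by rw [mul_sum, sum_mul]

theorem bestResponse_add {ι : Type*} (U : ι → Θ → ℝ) (a : ι) (w₁ w₂ : Θ → ℝ)
    (h₁ : ∀ i, ∑ θ, μ θ * w₁ θ * U i θ ≤ ∑ θ, μ θ * w₁ θ * U a θ)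
    (h₂ : ∀ i, ∑ θ, μ θ * w₂ θ * U i θ ≤ ∑ θ, μ θ * w₂ θ * U a θ) (i : ι) :
    ∑ θ, μ θ * (w₁ θ + w₂ θ) * U i θ ≤ ∑ θ, μ θ * (w₁ θ + w₂ θ) * U a θ := by
  rw [sum_mul_add_mul_weights, sum_mul_add_mul_weights]
  exact add_le_add (h₁ i) (h₂ i)

theorem bestResponse_sum {ι S : Type*} (U : ι → Θ → ℝ) (a : ι) (t : Finset S)
    (π : Θ → S → ℝ) (h : ∀ s ∈ t, ∀ i, ∑ θ, μ θ * π θ s * U i θ ≤ ∑ θ, μ θ * π θ s * U a θ)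
    (i : ι) :
    ∑ θ, μ θ * (∑ s ∈ t, π θ s) * U i θ ≤ ∑ θ, μ θ * (∑ s ∈ t, π θ s) * U a θ := by
  rw [sum_mul_sum_weights, sum_mul_sum_weights]
  exact sum_le_sum fun s hs => h s hs i

end Merging

section Coarsening

variable {Θ S T : Type*} [Fintype S] [DecidableEq T]

def coarsenSignals (π : Θ → S → ℝ) (g : S → T) : Θ → T → ℝ :=
  fun θ t => ∑ s with g s = t, π θ s

variable (π : Θ → S → ℝ) (g : S → T)

theorem coarsenSignals_nonneg (hπ : ∀ θ s, 0 ≤ π θ s) (θ : Θ) (t : T) :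
    0 ≤ coarsenSignals π g θ t :=
  sum_nonneg fun s _ => hπ θ s

theorem sum_coarsenSignals [Fintype T] (θ : Θ) : ∑ t, coarsenSignals π g θ t = ∑ s, π θ s :=
  sum_fiberwise _ _ _

theorem bestResponse_coarsenSignals [Fintype Θ] (μ : Θ → ℝ) {ι : Type*} (U : T → ι → Θ → ℝ)
    (b : T → ι)
    (h : ∀ s i, ∑ θ, μ θ * π θ s * U (g s) i θ ≤ ∑ θ, μ θ * π θ s * U (g s) (b (g s)) θ)
    (t : T) (i : ι) :
    ∑ θ, μ θ * coarsenSignals π g θ t * U t i θ ≤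
      ∑ θ, μ θ * coarsenSignals π g θ t * U t (b t) θ :=
  bestResponse_sum μ (U t) (b t) _ π
    (fun s hs => (mem_filter.mp hs).2 ▸ h s) i

theorem sum_sum_mul_coarsenSignals [Fintype Θ] [Fintype T] (μ : Θ → ℝ) (u : T → Θ → ℝ) :
    ∑ t, ∑ θ, μ θ * coarsenSignals π g θ t * u t θ =
      ∑ s, ∑ θ, μ θ * π θ s * u (g s) θ := by
  calc ∑ t, ∑ θ, μ θ * coarsenSignals π g θ t * u t θ
      = ∑ t, ∑ s with g s = t, ∑ θ, μ θ * π θ s * u (g s) θ :=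
        sum_congr rfl fun t _ => by
          dsimp only [coarsenSignals]
          rw [sum_mul_sum_weights]
          exact sum_congr rfl fun s hs => by rw [(mem_filter.mp hs).2]
    _ = ∑ s, ∑ θ, μ θ * π θ s * u (g s) θ := sum_fiberwise _ _ _

end Coarsening

theorem stmt_11_general {Θ : Type} [Fintype Θ] {n m : ℕ}
    (μ : Θ → ℝ) (F : Θ → Fin n → Fin m → ℝ) (r : Fin m → ℝ) (c : Fin n → ℝ)
    (ε : ℝ) :
    (∀ (S : Type) [Fintype S], ∀ (π : Θ → S → ℝ) (s₁ s₂ : S) (α : ℝ) (a : Fin n),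
      (∀ i, ∑ θ, μ θ * π θ s₁ * (α * (∑ j, F θ a j * r j) - c a) ≥
            ∑ θ, μ θ * π θ s₁ * (α * (∑ j, F θ i j * r j) - c i)) →
      (∀ i, ∑ θ, μ θ * π θ s₂ * (α * (∑ j, F θ a j * r j) - c a) ≥
            ∑ θ, μ θ * π θ s₂ * (α * (∑ j, F θ i j * r j) - c i)) →
      ((∀ i, ∑ θ, μ θ * (π θ s₁ + π θ s₂) * (α * (∑ j, F θ a j * r j) - c a) ≥
             ∑ θ, μ θ * (π θ s₁ + π θ s₂) * (α * (∑ j, F θ i j * r j) - c i)) ∧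
       ∑ θ, μ θ * (π θ s₁ + π θ s₂) * ((1 - α) * (∑ j, F θ a j * r j)) =
         ∑ θ, μ θ * π θ s₁ * ((1 - α) * (∑ j, F θ a j * r j)) +
         ∑ θ, μ θ * π θ s₂ * ((1 - α) * (∑ j, F θ a j * r j)))) ∧
    (∀ (A : Finset ℝ), (A.card : ℝ) = 1/ε + 1 →
      ∀ (S : Type) [Fintype S], ∀ (π : Θ → S → ℝ) (αf : S → ℝ) (a : S → Fin n),
      (∀ θ s, 0 ≤ π θ s) → (∀ θ, ∑ s, π θ s = 1) → (∀ s, αf s ∈ A) →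
      (∀ s i, ∑ θ, μ θ * π θ s * (αf s * (∑ j, F θ (a s) j * r j) - c (a s)) ≥
              ∑ θ, μ θ * π θ s * (αf s * (∑ j, F θ i j * r j) - c i)) →
      ((Fintype.card (Fin n × {x // x ∈ A}) : ℝ) ≤ n * (1/ε + 1) ∧
        ∃ π' : Θ → Fin n × {x // x ∈ A} → ℝ,
          (∀ θ s, 0 ≤ π' θ s) ∧ (∀ θ, ∑ s, π' θ s = 1) ∧
          (∀ (s : Fin n × {x // x ∈ A}) (i : Fin n),
            ∑ θ, μ θ * π' θ s * ((s.2 : ℝ) * (∑ j, F θ s.1 j * r j) - c s.1) ≥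
            ∑ θ, μ θ * π' θ s * ((s.2 : ℝ) * (∑ j, F θ i j * r j) - c i)) ∧
          ∑ s : Fin n × {x // x ∈ A}, ∑ θ,
              μ θ * π' θ s * ((1 - (s.2 : ℝ)) * (∑ j, F θ s.1 j * r j)) =
            ∑ s : S, ∑ θ,
              μ θ * π θ s * ((1 - αf s) * (∑ j, F θ (a s) j * r j)))) := by
  refine ⟨fun S _ π s₁ s₂ α a h₁ h₂ => ⟨bestResponse_add μ _ a _ _ h₁ h₂,
    sum_mul_add_mul_weights μ _ _ _⟩, fun A hA S _ π αf a hπ hπ₁ hαA hIC => ⟨?_, ?_⟩⟩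
  · rw [Fintype.card_prod, Fintype.card_fin, Fintype.card_coe]
    push_cast
    rw [hA]
  · let g : S → Fin n × A := fun s => (a s, ⟨αf s, hαA s⟩)
    exact ⟨coarsenSignals π g, coarsenSignals_nonneg π g hπ,
      fun θ => (sum_coarsenSignals π g θ).trans (hπ₁ θ),
      bestResponse_coarsenSignals π g μ (fun t i θ => t.2 * (∑ j, F θ i j * r j) - c i)
        Prod.fst hIC,
      sum_sum_mul_coarsenSignals π g μ fun t θ => (1 - t.2) * (∑ j, F θ t.1 j * r j)⟩

/-- Menus of linear contracts: (1) two signals with the same linear parameter α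
and the same best response a can be merged, preserving incentive compatibility
and the principal's utility; (2) consequently, any mechanism with parameters in
a finite set A of size 1/ε+1 can be replaced by an equally good one using at
most n·(1/ε+1) signals (one per action-parameter pair). -/
theorem stmt_11 {Θ : Type} [Fintype Θ] {n m : ℕ}
    (μ : Θ → ℝ) (F : Θ → Fin n → Fin m → ℝ) (r : Fin m → ℝ) (c : Fin n → ℝ)
    (ε : ℝ) (hε : 0 < ε) :
    (∀ (S : Type) [Fintype S], ∀ (π : Θ → S → ℝ) (s₁ s₂ : S) (α : ℝ) (a : Fin n),
      (∀ i, ∑ θ, μ θ * π θ s₁ * (α * (∑ j, F θ a j * r j) - c a) ≥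
            ∑ θ, μ θ * π θ s₁ * (α * (∑ j, F θ i j * r j) - c i)) →
      (∀ i, ∑ θ, μ θ * π θ s₂ * (α * (∑ j, F θ a j * r j) - c a) ≥
            ∑ θ, μ θ * π θ s₂ * (α * (∑ j, F θ i j * r j) - c i)) →
      ((∀ i, ∑ θ, μ θ * (π θ s₁ + π θ s₂) * (α * (∑ j, F θ a j * r j) - c a) ≥
             ∑ θ, μ θ * (π θ s₁ + π θ s₂) * (α * (∑ j, F θ i j * r j) - c i)) ∧
       ∑ θ, μ θ * (π θ s₁ + π θ s₂) * ((1 - α) * (∑ j, F θ a j * r j)) =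
         ∑ θ, μ θ * π θ s₁ * ((1 - α) * (∑ j, F θ a j * r j)) +
         ∑ θ, μ θ * π θ s₂ * ((1 - α) * (∑ j, F θ a j * r j)))) ∧
    (∀ (A : Finset ℝ), (A.card : ℝ) = 1/ε + 1 →
      ∀ (S : Type) [Fintype S], ∀ (π : Θ → S → ℝ) (αf : S → ℝ) (a : S → Fin n),
      (∀ θ s, 0 ≤ π θ s) → (∀ θ, ∑ s, π θ s = 1) → (∀ s, αf s ∈ A) →
      (∀ s i, ∑ θ, μ θ * π θ s * (αf s * (∑ j, F θ (a s) j * r j) - c (a s)) ≥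
              ∑ θ, μ θ * π θ s * (αf s * (∑ j, F θ i j * r j) - c i)) →
      ((Fintype.card (Fin n × {x // x ∈ A}) : ℝ) ≤ n * (1/ε + 1) ∧
        ∃ π' : Θ → Fin n × {x // x ∈ A} → ℝ,
          (∀ θ s, 0 ≤ π' θ s) ∧ (∀ θ, ∑ s, π' θ s = 1) ∧
          (∀ (s : Fin n × {x // x ∈ A}) (i : Fin n),
            ∑ θ, μ θ * π' θ s * ((s.2 : ℝ) * (∑ j, F θ s.1 j * r j) - c s.1) ≥
            ∑ θ, μ θ * π' θ s * ((s.2 : ℝ) * (∑ j, F θ i j * r j) - c i)) ∧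
          ∑ s : Fin n × {x // x ∈ A}, ∑ θ,
              μ θ * π' θ s * ((1 - (s.2 : ℝ)) * (∑ j, F θ s.1 j * r j)) =
            ∑ s : S, ∑ θ,
              μ θ * π θ s * ((1 - αf s) * (∑ j, F θ (a s) j * r j)))) :=
  stmt_11_general μ F r c ε
end

section
/- Let g: P → ℝ be defined on a compact set P ⊆ ℝ₊^m by g(p) = max over feasible signaling schemes π of ∑_θ μ(θ)∑_s π(s|θ)⟨F^θ_{a(s,p,π)}, r − p⟩, where a(s,p,π) is the agent's best response with ties broken in favor of the principal. Then g is upper semicontinuous on P and attains its maximum on P. -/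
/-!
Treat the recommendation map `a` and the scheme `π` together as a point `y` of the compact set
(all maps) × (product of simplices); `a` ranges over a finite discrete space, so the principal's
utility is continuous in `(p, y)`, and obedience is a closed condition on `(p, y)`. Then `g` is the
value of maximizing a continuous function over the slices of a closed set with compact range, and
the upper half of Berge's maximum theorem applies: `{p | t ≤ g p}` is the projection of the
closed set `{(p, y) feasible | t ≤ utility}`, which is closed because the range is compact. An
upper semicontinuous function attains its maximum on a nonempty compact set.
-/

open Set

section SliceMaximum

variable {X Y : Type*} [TopologicalSpace X] [TopologicalSpace Y]

theorem IsClosed.isClosed_image_fst_of_subset_prod {K : Set (X × Y)} {S : Set Y}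
    (hK : IsClosed K) (hS : IsCompact S) (hKS : K ⊆ univ ×ˢ S) : IsClosed (Prod.fst '' K) := by
  have : CompactSpace S := isCompact_iff_compactSpace.mp hS
  let K' : Set (X × S) := (Prod.map id Subtype.val) ⁻¹' K
  have hK' : Prod.fst '' K' = Prod.fst '' K := by
    ext x
    constructor
    · rintro ⟨z, hz, rfl⟩
      exact ⟨_, hz, rfl⟩
    · rintro ⟨⟨x, y⟩, hz, rfl⟩
      exact ⟨(x, ⟨y, (hKS hz).2⟩), hz, rfl⟩
  rw [← hK']
  exact isClosedMap_fst_of_compactSpace _ (hK.preimage (by fun_prop))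

variable {γ : Type*} [ConditionallyCompleteLinearOrder γ] {f : X × Y → γ}
  {K : Set (X × Y)} {S : Set Y}

theorem UpperSemicontinuous.exists_isGreatest_image_prodMk_preimage
    (hf : UpperSemicontinuous f) (hK : IsClosed K) (hS : IsCompact S)
    (hKS : K ⊆ univ ×ˢ S) {x : X} (hx : (Prod.mk x ⁻¹' K).Nonempty) :
    ∃ y ∈ Prod.mk x ⁻¹' K,
      IsGreatest ((fun y => f (x, y)) '' (Prod.mk x ⁻¹' K)) (f (x, y)) := by
  have hslice : IsCompact (Prod.mk x ⁻¹' K) :=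
    hS.of_isClosed_subset (hK.preimage (Continuous.prodMk_right x)) fun y hy => (hKS hy).2
  obtain ⟨y, hy, hmax⟩ := ((hf.comp (Continuous.prodMk_right x)).upperSemicontinuousOn
    _).exists_isMaxOn hx hslice
  exact ⟨y, hy, mem_image_of_mem _ hy, forall_mem_image.2 (isMaxOn_iff.1 hmax)⟩

/-- The upper half of Berge's maximum theorem: maximizing an upper semicontinuous objective over
the slices of a closed constraint set with compact range yields an upper semicontinuous value. -/
theorem UpperSemicontinuous.sSup_image_prodMk_preimage
    (hf : UpperSemicontinuous f) (hK : IsClosed K) (hS : IsCompact S)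
    (hKS : K ⊆ univ ×ˢ S) (hne : ∀ x, (Prod.mk x ⁻¹' K).Nonempty) :
    UpperSemicontinuous fun x => sSup ((fun y => f (x, y)) '' (Prod.mk x ⁻¹' K)) := by
  refine upperSemicontinuous_iff_isClosed_preimage.2 fun t => ?_
  suffices h : (fun x => sSup ((fun y => f (x, y)) '' (Prod.mk x ⁻¹' K))) ⁻¹' Ici t =
      Prod.fst '' (K ∩ f ⁻¹' Ici t) by
    rw [h]
    exact (hK.inter (hf.isClosed_preimage t)).isClosed_image_fst_of_subset_prod hS
      (inter_subset_left.trans hKS)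
  ext x
  obtain ⟨y, hy, hgreatest⟩ := hf.exists_isGreatest_image_prodMk_preimage hK hS hKS (hne x)
  simp only [mem_preimage, mem_Ici, hgreatest.csSup_eq]
  constructor
  · exact fun ht => ⟨(x, y), ⟨hy, ht⟩, rfl⟩
  · rintro ⟨⟨x, y'⟩, ⟨hy', ht⟩, rfl⟩
    exact ht.trans (hgreatest.2 (mem_image_of_mem _ hy'))

end SliceMaximum

theorem continuous_prod_prod_of_discrete_middle {X A Y Z : Type*} [TopologicalSpace X]
    [TopologicalSpace A] [DiscreteTopology A] [TopologicalSpace Y] [TopologicalSpace Z]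
    {φ : A → X × Y → Z} (hφ : ∀ a, Continuous (φ a)) :
    Continuous fun z : X × (A × Y) => φ z.2.1 (z.1, z.2.2) :=
  ((continuous_prod_of_discrete_left (f := fun w : A × (X × Y) => φ w.1 w.2)).2 hφ).comp
    (f := fun z : X × (A × Y) => (z.2.1, (z.1, z.2.2))) (by fun_prop)

namespace SingleContract

variable {Θ : Type} [Fintype Θ] {n m : ℕ}
  (μ : Θ → ℝ) (F : Θ → Fin n → Fin m → ℝ) (c : Fin n → ℝ) (r : Fin m → ℝ)

/-- The agent's expected utility from action `i` after signal `s`, left unnormalized: it is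
weighted by the probability of `s`, which does not change the agent's best responses. -/
def agentUtility (p : Fin m → ℝ) (π : Θ → Fin n → ℝ) (s i : Fin n) : ℝ :=
  ∑ θ, μ θ * π θ s * ((∑ j, F θ i j * p j) - c i)

def principalUtility (p : Fin m → ℝ) (a : Fin n → Fin n) (π : Θ → Fin n → ℝ) : ℝ :=
  ∑ s, ∑ θ, μ θ * π θ s * (∑ j, F θ (a s) j * (r j - p j))

/-- Triples `(p, (a, π))` of a contract, a recommendation map and a signaling scheme such that
recommending `a s` after signal `s` is a best response of the agent. -/
def feasible : Set ((Fin m → ℝ) × ((Fin n → Fin n) × (Θ → Fin n → ℝ))) :=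
  {z | z.2.2 ∈ univ.pi (fun _ => stdSimplex ℝ (Fin n)) ∧
    ∀ s i, agentUtility μ F c z.1 z.2.2 s i ≤ agentUtility μ F c z.1 z.2.2 s (z.2.1 s)}

theorem isClosed_feasible : IsClosed (feasible μ F c) := by
  have h : feasible μ F c = (fun z => z.2.2) ⁻¹' univ.pi (fun _ => stdSimplex ℝ (Fin n)) ∩
      ⋂ s, ⋂ i, {z | agentUtility μ F c z.1 z.2.2 s i ≤
        agentUtility μ F c z.1 z.2.2 s (z.2.1 s)} := by
    ext z; simp [feasible]
  rw [h]
  refine ((isClosed_set_pi fun _ _ => isClosed_stdSimplex ℝ _).preimage (by fun_prop)).inter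
    (isClosed_iInter fun s => isClosed_iInter fun i => isClosed_le ?_ ?_)
  · unfold agentUtility; fun_prop
  · exact continuous_prod_prod_of_discrete_middle (φ := fun (a : Fin n → Fin n) (x : _ × _) =>
      agentUtility μ F c x.1 x.2 s (a s)) fun a => by unfold agentUtility; fun_prop

theorem continuous_principalUtility :
    Continuous fun z : (Fin m → ℝ) × ((Fin n → Fin n) × (Θ → Fin n → ℝ)) =>
      principalUtility μ F r z.1 z.2.1 z.2.2 :=
  continuous_prod_prod_of_discrete_middle (φ := fun (a : Fin n → Fin n) (x : _ × _) =>
    principalUtility μ F r x.1 a x.2) fun a => by unfold principalUtility; fun_prop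

theorem feasible_subset_univ_prod :
    feasible μ F c ⊆ univ ×ˢ (univ ×ˢ univ.pi fun _ => stdSimplex ℝ (Fin n)) :=
  fun _ hz => ⟨trivial, trivial, hz.1⟩

theorem exists_feasible [Nonempty (Fin n)] (p : Fin m → ℝ) :
    (Prod.mk p ⁻¹' feasible μ F c).Nonempty := by
  let s₀ : Fin n := Classical.arbitrary _
  choose a ha using fun s =>
    Finite.exists_max (agentUtility μ F c p (fun _ => Pi.single s₀ 1) s)
  exact ⟨(a, fun _ => Pi.single s₀ 1), fun _ _ => single_mem_stdSimplex ℝ s₀, ha⟩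

end SingleContract

open SingleContract in
theorem stmt_18_general {Θ : Type} [Fintype Θ] {n m : ℕ}
    (μ : Θ → ℝ) (F : Θ → Fin n → Fin m → ℝ) (c : Fin n → ℝ) (r : Fin m → ℝ)
    (hn : 0 < n)
    (P : Set (Fin m → ℝ)) (hPc : IsCompact P) (hPne : P.Nonempty) :
    let g : (Fin m → ℝ) → ℝ := fun p => sSup {u : ℝ |
      ∃ (π : Θ → Fin n → ℝ) (a : Fin n → Fin n),
        (∀ θ s, 0 ≤ π θ s) ∧ (∀ θ, ∑ s, π θ s = 1) ∧
        (∀ s i, ∑ θ, μ θ * π θ s * ((∑ j, F θ (a s) j * p j) - c (a s)) ≥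
                ∑ θ, μ θ * π θ s * ((∑ j, F θ i j * p j) - c i)) ∧
        u = ∑ s, ∑ θ, μ θ * π θ s * (∑ j, F θ (a s) j * (r j - p j))}
    UpperSemicontinuousOn g P ∧ ∃ p ∈ P, ∀ q ∈ P, g q ≤ g p := by
  intro g
  have : Nonempty (Fin n) := Fin.pos_iff_nonempty.1 hn
  have hg : g = fun p => sSup ((fun y => principalUtility μ F r p y.1 y.2) ''
      (Prod.mk p ⁻¹' feasible μ F c)) := by
    funext p
    refine congrArg sSup (ext fun u => ?_)
    constructor
    · rintro ⟨π, a, hπ₀, hπ₁, hobey, rfl⟩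
      exact ⟨(a, π), ⟨fun θ _ => ⟨hπ₀ θ, hπ₁ θ⟩, hobey⟩, rfl⟩
    · rintro ⟨⟨a, π⟩, ⟨hπ, hobey⟩, rfl⟩
      exact ⟨π, a, fun θ => (hπ θ trivial).1, fun θ => (hπ θ trivial).2, hobey, rfl⟩
  have husc : UpperSemicontinuous g := by
    rw [hg]
    exact (continuous_principalUtility μ F r).upperSemicontinuous.sSup_image_prodMk_preimage
      (isClosed_feasible μ F c)
      (isCompact_univ.prod (isCompact_univ_pi fun _ => isCompact_stdSimplex ℝ _))
      (feasible_subset_univ_prod μ F c) (exists_feasible μ F c)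
  obtain ⟨p, hp, hmax⟩ := (husc.upperSemicontinuousOn P).exists_isMaxOn hPne hPc
  exact ⟨husc.upperSemicontinuousOn P, p, hp, isMaxOn_iff.1 hmax⟩

/-- The value function g(p) of the single-contract joint design problem (the
best principal utility over feasible direct signaling schemes and incentive-
compatible recommendations, with ties broken in the principal's favor) is upper
semicontinuous on a compact set of contracts and attains its maximum there. -/
theorem stmt_18 {Θ : Type} [Fintype Θ] {n m : ℕ}
    (μ : Θ → ℝ) (F : Θ → Fin n → Fin m → ℝ) (c : Fin n → ℝ) (r : Fin m → ℝ)
    (hn : 0 < n) (hμ0 : ∀ θ, 0 ≤ μ θ) (hμ1 : ∑ θ, μ θ = 1)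
    (hF0 : ∀ θ i j, 0 ≤ F θ i j) (hF1 : ∀ θ i, ∑ j, F θ i j = 1)
    (P : Set (Fin m → ℝ)) (hPc : IsCompact P) (hPne : P.Nonempty)
    (hPnn : ∀ p ∈ P, ∀ j, 0 ≤ p j) :
    let g : (Fin m → ℝ) → ℝ := fun p => sSup {u : ℝ |
      ∃ (π : Θ → Fin n → ℝ) (a : Fin n → Fin n),
        (∀ θ s, 0 ≤ π θ s) ∧ (∀ θ, ∑ s, π θ s = 1) ∧
        (∀ s i, ∑ θ, μ θ * π θ s * ((∑ j, F θ (a s) j * p j) - c (a s)) ≥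
                ∑ θ, μ θ * π θ s * ((∑ j, F θ i j * p j) - c i)) ∧
        u = ∑ s, ∑ θ, μ θ * π θ s * (∑ j, F θ (a s) j * (r j - p j))}
    UpperSemicontinuousOn g P ∧ ∃ p ∈ P, ∀ q ∈ P, g q ≤ g p :=
  stmt_18_general μ F c r hn P hPc hPne
end
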